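/- arXiv:2010.06798 — 2 statements merged into one kernel-verified Lean document; each statement's English description precedes it below -/
import Mathlib

section
/- Let f : ℝⁿ → ℝ be differentiable with L-Lipschitz gradient and ρ > √2·L. Suppose f is bounded below by M on ℝⁿ. Then the function Φ(x, s) = f(x) + ⟨s − x, ∇f(x)⟩ + (ρ/2)‖x − s‖², evaluated with the dual substitution y = −∇f(x), satisfies Φ(x, s) ≥ M for all x, s ∈ ℝⁿ. -/
/-! The descent lemma `f s ≤ f x + ⟪∇f x, s - x⟫ + L/2 ‖s - x‖²`, obtained by integrating the
Lipschitz bound on the gradient along the segment from `x` to `s`, gives `f s ≤ Φ x s` since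
`L ≤ √2 L < ρ`; hence `M ≤ f s ≤ Φ x s`. -/

open Set

theorem le_add_deriv_add_half_of_deriv_sub_le {g g' : ℝ → ℝ} {K : ℝ}
    (hg : ∀ t, HasDerivAt g (g' t) t) (hg' : ∀ t ∈ Ioo (0 : ℝ) 1, g' t - g' 0 ≤ K * t) :
    g 1 ≤ g 0 + g' 0 + K / 2 := by
  set h : ℝ → ℝ := fun t ↦ g t - t * g' 0 - K / 2 * t ^ 2
  have hh : ∀ t, HasDerivAt h (g' t - g' 0 - K * t) t := fun t ↦
    (((hg t).sub ((hasDerivAt_id' t).mul_const (g' 0))).sub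
      ((hasDerivAt_pow 2 t).const_mul (K / 2))).congr_deriv (by ring)
  have hanti : AntitoneOn h (Icc 0 1) := by
    refine antitoneOn_of_deriv_nonpos (convex_Icc 0 1)
      (fun t _ ↦ (hh t).continuousAt.continuousWithinAt)
      (fun t _ ↦ (hh t).differentiableAt.differentiableWithinAt) fun t ht ↦ ?_
    rw [interior_Icc] at ht
    rw [(hh t).deriv]
    linarith [hg' t ht]
  have := hanti (left_mem_Icc.2 zero_le_one) (right_mem_Icc.2 zero_le_one) zero_le_one
  simp only [h] at this
  linarith

theorem le_add_fderiv_add_of_norm_fderiv_sub_le {E : Type*} [NormedAddCommGroup E]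
    [NormedSpace ℝ E] {f : E → ℝ} {L : ℝ} (hf : Differentiable ℝ f)
    (hlip : ∀ x y, ‖fderiv ℝ f x - fderiv ℝ f y‖ ≤ L * ‖x - y‖) (x y : E) :
    f y ≤ f x + fderiv ℝ f x (y - x) + L / 2 * ‖y - x‖ ^ 2 := by
  set v := y - x
  have hline : ∀ t : ℝ, HasDerivAt (fun t : ℝ ↦ x + t • v) v t := fun t ↦ by
    simpa using ((hasDerivAt_id t).smul_const v).const_add x
  have hg : ∀ t : ℝ, HasDerivAt (fun t ↦ f (x + t • v)) (fderiv ℝ f (x + t • v) v) t :=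
    fun t ↦ (hf _).hasFDerivAt.comp_hasDerivAt t (hline t)
  have hg' : ∀ t ∈ Ioo (0 : ℝ) 1,
      fderiv ℝ f (x + t • v) v - fderiv ℝ f (x + (0 : ℝ) • v) v ≤ L * ‖v‖ ^ 2 * t := by
    intro t ht
    calc fderiv ℝ f (x + t • v) v - fderiv ℝ f (x + (0 : ℝ) • v) v
        = (fderiv ℝ f (x + t • v) - fderiv ℝ f x) v := by simp
      _ ≤ ‖fderiv ℝ f (x + t • v) - fderiv ℝ f x‖ * ‖v‖ :=
        (le_abs_self _).trans ((fderiv ℝ f (x + t • v) - fderiv ℝ f x).le_opNorm v)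
      _ ≤ L * ‖x + t • v - x‖ * ‖v‖ := by gcongr; exact hlip _ _
      _ = L * ‖v‖ ^ 2 * t := by
        rw [add_sub_cancel_left, norm_smul, Real.norm_eq_abs, abs_of_pos ht.1]; ring
  have := le_add_deriv_add_half_of_deriv_sub_le hg hg'
  simp only [zero_smul, add_zero, one_smul, v, add_sub_cancel] at this
  linarith

theorem le_add_inner_gradient_add_of_norm_gradient_sub_le {E : Type*} [NormedAddCommGroup E]
    [InnerProductSpace ℝ E] [CompleteSpace E] {f : E → ℝ} {L : ℝ} (hf : Differentiable ℝ f)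
    (hlip : ∀ x y, ‖gradient f x - gradient f y‖ ≤ L * ‖x - y‖) (x y : E) :
    f y ≤ f x + inner ℝ (gradient f x) (y - x) + L / 2 * ‖y - x‖ ^ 2 := by
  have hfderiv : ∀ z, fderiv ℝ f z = InnerProductSpace.toDual ℝ E (gradient f z) :=
    fun z ↦ (hf z).hasGradientAt.hasFDerivAt.fderiv
  have hlip' : ∀ x y, ‖fderiv ℝ f x - fderiv ℝ f y‖ ≤ L * ‖x - y‖ := fun x y ↦ by
    rw [hfderiv, hfderiv, ← map_sub, LinearIsometryEquiv.norm_map]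
    exact hlip x y
  have := le_add_fderiv_add_of_norm_fderiv_sub_le hf hlip' x y
  rwa [hfderiv, InnerProductSpace.toDual_apply_apply] at this

/-- abstract Lemma 3: For `f` differentiable with `L`-Lipschitz
gradient, `ρ > √2·L`, and `f` bounded below by `M`, the function
`Φ(x, s) = f(x) + ⟨s − x, ∇f(x)⟩ + (ρ/2)‖x − s‖²` satisfies `Φ(x, s) ≥ M`. -/
theorem augmented_lagrangian_bounded_below {n : ℕ}
    (f : EuclideanSpace ℝ (Fin n) → ℝ) (hf : Differentiable ℝ f)
    (L : ℝ) (hL : 0 ≤ L)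
    (hlip : ∀ x y, ‖gradient f x - gradient f y‖ ≤ L * ‖x - y‖)
    (ρ : ℝ) (hρ : Real.sqrt 2 * L < ρ)
    (M : ℝ) (hM : ∀ x, M ≤ f x)
    (Φ : EuclideanSpace ℝ (Fin n) → EuclideanSpace ℝ (Fin n) → ℝ)
    (hΦ : ∀ x s, Φ x s = f x + (inner ℝ (s - x) (gradient f x) : ℝ) + ρ / 2 * ‖x - s‖ ^ 2) :
    ∀ x s, M ≤ Φ x s := by
  intro x s
  have hLρ : L ≤ ρ := by nlinarith [Real.one_lt_sqrt_two]
  have hdescent := le_add_inner_gradient_add_of_norm_gradient_sub_le hf hlip x s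
  have hquad : L / 2 * ‖s - x‖ ^ 2 ≤ ρ / 2 * ‖s - x‖ ^ 2 := by gcongr
  rw [hΦ, real_inner_comm, norm_sub_rev]
  linarith [hM s]
end

section
/- For Q a positive integer and real α_q ≥ 0, the function (x_1, ..., x_Q) ↦ (1/2)‖r − H∑_{q=1}^Q 2^{q−1}x_q‖² − ∑_{q=1}^Q (α_q/2)‖x_q‖², minimized over x_q ∈ [−1,1]ⁿ for each q, attains its minimum (the feasible set is compact and the function continuous, so a minimizer exists), and if α_q are large enough that the objective is strictly concave in each coordinate direction of each x_q (i.e., α_q > 4^{q−1}·λ_max(HᵀH) for all q), then every minimizer has all coordinates of every x_q in {−1, 1}. -/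
/-!
Along the line through a feasible point in the direction of the `i`-th coordinate of block `q`,
the objective is a quadratic in the step length with leading coefficient
`(4^q ‖H eᵢ‖² - α_q) / 2`. As `‖H eᵢ‖² = (HᵀH)ᵢᵢ ≤ λ_max(HᵀH)`, the hypothesis makes this
coefficient negative, so the objective restricted to the feasible segment of that line is strictly
concave and is minimized only at an endpoint, i.e. where the coordinate equals `±1`.
A minimizer exists because the box is compact and the objective continuous.
-/

noncomputable def toE {n : ℕ} (v : Fin n → ℝ) : EuclideanSpace ℝ (Fin n) := WithLp.toLp 2 v

noncomputable def lamMax {m n : ℕ} (H : Matrix (Fin m) (Fin n) ℝ) : ℝ :=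
  ⨆ i, (show (H.transpose * H).IsHermitian by
    rw [← Matrix.conjTranspose_eq_transpose_of_trivial]
    exact Matrix.isHermitian_conjTranspose_mul_self H).eigenvalues i

open Matrix Set

lemma norm_add_smul_sq {F : Type*} [NormedAddCommGroup F] [InnerProductSpace ℝ F]
    (u w : F) (t : ℝ) :
    ‖u + t • w‖ ^ 2 = ‖u‖ ^ 2 + 2 * t * inner ℝ u w + t ^ 2 * ‖w‖ ^ 2 := by
  rw [norm_add_sq_real, inner_smul_right, norm_smul, mul_pow, Real.norm_eq_abs, sq_abs]
  ring

lemma norm_sub_smul_sq {F : Type*} [NormedAddCommGroup F] [InnerProductSpace ℝ F]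
    (u w : F) (t : ℝ) :
    ‖u - t • w‖ ^ 2 = ‖u‖ ^ 2 - 2 * t * inner ℝ u w + t ^ 2 * ‖w‖ ^ 2 := by
  rw [sub_eq_add_neg, ← smul_neg, norm_add_smul_sq, inner_neg_right, norm_neg]
  ring

lemma sum_mul_norm_sq_pi_single {ι E : Type*} [Fintype ι] [DecidableEq ι]
    [SeminormedAddCommGroup E] (c : ι → ℝ) (q : ι) (v : E) :
    ∑ p, c p * ‖(Pi.single q v : ι → E) p‖ ^ 2 = c q * ‖v‖ ^ 2 := by
  rw [Finset.sum_eq_single q (fun p _ hp => by simp [hp]) (by simp)]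
  simp

lemma strictConcaveOn_quadratic {a : ℝ} (ha : a < 0) (b c : ℝ) {s : Set ℝ} (hs : Convex ℝ s) :
    StrictConcaveOn ℝ s fun t => a * t ^ 2 + b * t + c := by
  refine ⟨hs, fun x _ y _ hxy u v hu hv huv => ?_⟩
  obtain rfl : v = 1 - u := by linarith
  have hsq : 0 < (x - y) ^ 2 := by positivity
  simp only [smul_eq_mul]
  nlinarith [mul_pos hu hv, mul_pos (mul_pos hu hv) hsq]

theorem StrictConcaveOn.eq_left_or_eq_right_of_isMinOn {𝕜 : Type*} [Field 𝕜] [LinearOrder 𝕜]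
    [IsStrictOrderedRing 𝕜] {g : 𝕜 → 𝕜} {a b t : 𝕜} (hg : StrictConcaveOn 𝕜 (Icc a b) g)
    (ht : t ∈ Icc a b) (hmin : IsMinOn g (Icc a b) t) : t = a ∨ t = b := by
  by_contra! hne
  have hat : a < t := lt_of_le_of_ne ht.1 (Ne.symm hne.1)
  have htb : t < b := lt_of_le_of_ne ht.2 hne.2
  have ha : a ∈ Icc a b := left_mem_Icc.2 (hat.trans htb).le
  have hb : b ∈ Icc a b := right_mem_Icc.2 (hat.trans htb).le
  have hlt := hg.lt_on_openSegment ha hb (hat.trans htb).ne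
    (by rw [openSegment_eq_Ioo (hat.trans htb)]; exact ⟨hat, htb⟩)
  exact hlt.not_ge (le_min (hmin ha) (hmin hb))

lemma Matrix.IsHermitian.diag_le_iSup_eigenvalues {ι : Type*} [Fintype ι] [DecidableEq ι]
    {A : Matrix ι ι ℝ} (hA : A.IsHermitian) (i : ι) : A i i ≤ ⨆ j, hA.eigenvalues j := by
  set U : Matrix ι ι ℝ := ↑hA.eigenvectorUnitary
  have hdiag : A i i = ∑ j, hA.eigenvalues j * U i j ^ 2 := by
    conv_lhs => rw [hA.spectral_theorem]
    simp [mul_apply, diagonal_apply, U, sq, mul_comm, mul_left_comm]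
  have hrow : ∑ j, U i j ^ 2 = 1 := by
    simpa [mul_apply, sq, U] using
      congrFun (congrFun (Unitary.coe_mul_star_self hA.eigenvectorUnitary) i) i
  calc A i i = ∑ j, hA.eigenvalues j * U i j ^ 2 := hdiag
    _ ≤ ∑ j, (⨆ k, hA.eigenvalues k) * U i j ^ 2 := by
      gcongr with j
      exact le_ciSup (finite_range _).bddAbove j
    _ = ⨆ j, hA.eigenvalues j := by rw [← Finset.mul_sum, hrow, mul_one]

lemma sum_sq_col_le_lamMax {m n : ℕ} (H : Matrix (Fin m) (Fin n) ℝ) (i : Fin n) :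
    ∑ k, H k i ^ 2 ≤ lamMax H := by
  have hA : (Hᵀ * H).IsHermitian := by
    simpa using isHermitian_conjTranspose_mul_self H
  calc ∑ k, H k i ^ 2 = (Hᵀ * H) i i := by simp [mul_apply, sq]
    _ ≤ lamMax H := hA.diag_le_iSup_eigenvalues i

noncomputable def blockSingle {Q n : ℕ} (q : Fin Q) (i : Fin n) :
    Fin Q → EuclideanSpace ℝ (Fin n) :=
  Pi.single q (EuclideanSpace.single i 1)

section PenalizedObjective

variable {m n Q : ℕ} (H : Matrix (Fin m) (Fin n) ℝ) (r : EuclideanSpace ℝ (Fin m))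
  (α : Fin Q → ℝ)

noncomputable def stackedImage (xs : Fin Q → EuclideanSpace ℝ (Fin n)) :
    EuclideanSpace ℝ (Fin m) :=
  toE (H *ᵥ fun i => ∑ q : Fin Q, 2 ^ (q : ℕ) * xs q i)

noncomputable def penalizedObjective (xs : Fin Q → EuclideanSpace ℝ (Fin n)) : ℝ :=
  (1 / 2) * ‖r - stackedImage H xs‖ ^ 2 - ∑ q, α q / 2 * ‖xs q‖ ^ 2

lemma stackedImage_add_smul (xs d : Fin Q → EuclideanSpace ℝ (Fin n)) (t : ℝ) :
    stackedImage H (xs + t • d) = stackedImage H xs + t • stackedImage H d := by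
  ext k
  simp [stackedImage, toE, mulVec, dotProduct, mul_add, Finset.sum_add_distrib, Finset.mul_sum]
  exact Finset.sum_congr rfl fun _ _ => Finset.sum_congr rfl fun _ _ => by ring

lemma continuous_stackedImage : Continuous (stackedImage (Q := Q) H) := by
  unfold stackedImage toE
  fun_prop

lemma continuous_penalizedObjective : Continuous (penalizedObjective H r α) := by
  unfold penalizedObjective
  have := continuous_stackedImage (Q := Q) H
  fun_prop

lemma penalizedObjective_add_smul (xs d : Fin Q → EuclideanSpace ℝ (Fin n)) (t : ℝ) :
    penalizedObjective H r α (xs + t • d) =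
      ((1 / 2) * ‖stackedImage H d‖ ^ 2 - ∑ q, α q / 2 * ‖d q‖ ^ 2) * t ^ 2
        + (-inner ℝ (r - stackedImage H xs) (stackedImage H d)
            - ∑ q, α q * inner ℝ (xs q) (d q)) * t
        + penalizedObjective H r α xs := by
  simp only [penalizedObjective, stackedImage_add_smul, ← sub_sub, norm_sub_smul_sq, Pi.add_apply,
    Pi.smul_apply, norm_add_smul_sq]
  have hlin : ∑ q, α q / 2 * (2 * t * inner ℝ (xs q) (d q)) =
      (∑ q, α q * inner ℝ (xs q) (d q)) * t := by
    rw [Finset.sum_mul]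
    exact Finset.sum_congr rfl fun _ _ => by ring
  have hquad : ∑ q, α q / 2 * (t ^ 2 * ‖d q‖ ^ 2) = (∑ q, α q / 2 * ‖d q‖ ^ 2) * t ^ 2 := by
    rw [Finset.sum_mul]
    exact Finset.sum_congr rfl fun _ _ => by ring
  simp only [mul_add, Finset.sum_add_distrib, hlin, hquad]
  ring

lemma stackedImage_blockSingle (q : Fin Q) (i : Fin n) :
    stackedImage H (blockSingle q i) = (2 ^ (q : ℕ) : ℝ) • toE fun k => H k i := by
  have hweights : (fun j => ∑ p : Fin Q, 2 ^ (p : ℕ) * blockSingle q i p j) =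
      (2 ^ (q : ℕ) : ℝ) • Pi.single i 1 := by
    ext j
    rw [Finset.sum_eq_single q (fun p _ hp => by simp [blockSingle, hp]) (by simp)]
    simp [blockSingle, Pi.single_apply]
  rw [stackedImage, hweights, mulVec_smul, mulVec_single_one, toE, WithLp.toLp_smul]
  rfl

lemma norm_sq_stackedImage_blockSingle (q : Fin Q) (i : Fin n) :
    ‖stackedImage H (blockSingle q i)‖ ^ 2 = 4 ^ (q : ℕ) * ∑ k, H k i ^ 2 := by
  rw [stackedImage_blockSingle, norm_smul, mul_pow, EuclideanSpace.real_norm_sq_eq]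
  simp only [toE, Real.norm_eq_abs, sq_abs]
  rw [sq, ← mul_pow]
  norm_num

end PenalizedObjective

def unitBox (Q n : ℕ) : Set (Fin Q → EuclideanSpace ℝ (Fin n)) :=
  {xs | ∀ q i, xs q i ∈ Icc (-1) 1}

lemma isCompact_unitBox (Q n : ℕ) : IsCompact (unitBox Q n) := by
  have hK : IsCompact ((PiLp.homeomorph 2 fun _ : Fin n => ℝ) ⁻¹' univ.pi fun _ => Icc (-1) 1) :=
    (PiLp.homeomorph 2 _).isCompact_preimage.2 (isCompact_univ_pi fun _ => isCompact_Icc)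
  convert isCompact_univ_pi fun _ : Fin Q => hK
  ext xs
  simp [unitBox, PiLp.homeomorph, -pi_univ_Icc]

lemma zero_mem_unitBox (Q n : ℕ) : 0 ∈ unitBox Q n := fun _ _ => by simp

lemma add_smul_blockSingle_mem_unitBox {Q n : ℕ} {xs : Fin Q → EuclideanSpace ℝ (Fin n)}
    (hxs : xs ∈ unitBox Q n) {q : Fin Q} {i : Fin n} {t : ℝ}
    (ht : t ∈ Icc (-1 - xs q i) (1 - xs q i)) :
    xs + t • blockSingle q i ∈ unitBox Q n := by
  intro p j
  by_cases hpq : p = q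
  · subst hpq
    by_cases hji : j = i
    · subst hji
      simp only [blockSingle, Pi.add_apply, Pi.smul_apply, Pi.single_eq_same, PiLp.add_apply,
        PiLp.smul_apply, PiLp.single_apply, if_true, smul_eq_mul, mul_one]
      exact ⟨by linarith [ht.1], by linarith [ht.2]⟩
    · simpa [blockSingle, hji] using hxs p j
  · simpa [blockSingle, hpq] using hxs p j

lemma eq_one_or_eq_neg_one_of_isMinOn {m n Q : ℕ} (H : Matrix (Fin m) (Fin n) ℝ)
    (r : EuclideanSpace ℝ (Fin m)) {α : Fin Q → ℝ}
    (hα : ∀ q : Fin Q, 4 ^ (q : ℕ) * lamMax H < α q)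
    {xs : Fin Q → EuclideanSpace ℝ (Fin n)} (hxs : xs ∈ unitBox Q n)
    (hmin : IsMinOn (penalizedObjective H r α) (unitBox Q n) xs) (q : Fin Q) (i : Fin n) :
    xs q i = 1 ∨ xs q i = -1 := by
  have hlead : (1 / 2) * ‖stackedImage H (blockSingle q i)‖ ^ 2
      - ∑ p, α p / 2 * ‖blockSingle q i p‖ ^ 2 < 0 := by
    have hcol := mul_le_mul_of_nonneg_left (sum_sq_col_le_lamMax H i)
      (by positivity : (0 : ℝ) ≤ 4 ^ (q : ℕ))
    rw [norm_sq_stackedImage_blockSingle, blockSingle,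
      sum_mul_norm_sq_pi_single (fun p => α p / 2), PiLp.norm_single, norm_one, one_pow]
    linarith [hα q]
  set g := fun t : ℝ => penalizedObjective H r α (xs + t • blockSingle q i)
  have hconc : StrictConcaveOn ℝ (Icc (-1 - xs q i) (1 - xs q i)) g := by
    simp only [g, penalizedObjective_add_smul]
    exact strictConcaveOn_quadratic hlead _ _ (convex_Icc _ _)
  have hmin0 : IsMinOn g (Icc (-1 - xs q i) (1 - xs q i)) 0 := fun t ht => by
    simpa [g] using hmin (add_smul_blockSingle_mem_unitBox hxs ht)
  have h0 : (0 : ℝ) ∈ Icc (-1 - xs q i) (1 - xs q i) :=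
    ⟨by linarith [(hxs q i).1], by linarith [(hxs q i).2]⟩
  rcases hconc.eq_left_or_eq_right_of_isMinOn h0 hmin0 with h | h
  · right; linarith
  · left; linarith

theorem penalized_objective_minimizers_binary_general {m n Q : ℕ}
    (H : Matrix (Fin m) (Fin n) ℝ) (r : EuclideanSpace ℝ (Fin m))
    (α : Fin Q → ℝ)
    (f : (Fin Q → EuclideanSpace ℝ (Fin n)) → ℝ)
    (hf : ∀ xs, f xs = (1 / 2) * ‖r - toE (H.mulVec (fun i => ∑ q : Fin Q, 2 ^ (q : ℕ) * xs q i))‖ ^ 2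
        - ∑ q : Fin Q, α q / 2 * ‖xs q‖ ^ 2)
    (S : Set (Fin Q → EuclideanSpace ℝ (Fin n)))
    (hS : S = {xs | ∀ q i, xs q i ∈ Set.Icc (-1 : ℝ) 1}) :
    (∃ xs ∈ S, ∀ ys ∈ S, f xs ≤ f ys) ∧
    ((∀ q : Fin Q, 4 ^ (q : ℕ) * lamMax H < α q) →
      ∀ xs ∈ S, (∀ ys ∈ S, f xs ≤ f ys) → ∀ q i, xs q i = 1 ∨ xs q i = -1) := by
  obtain rfl : f = penalizedObjective H r α := funext hf
  obtain rfl : S = unitBox Q n := hS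
  refine ⟨?_, fun hα xs hxs hmin => eq_one_or_eq_neg_one_of_isMinOn H r hα hxs hmin⟩
  exact (isCompact_unitBox Q n).exists_isMinOn ⟨0, zero_mem_unitBox Q n⟩
    (continuous_penalizedObjective H r α).continuousOn

/-- The penalized objective
`(x_1,…,x_Q) ↦ (1/2)‖r − H ∑_q 2^{q−1} x_q‖² − ∑_q (α_q/2)‖x_q‖²`
attains its minimum over the box `([−1,1]ⁿ)^Q`, and if
`α_q > 4^{q−1}·λ_max(HᵀH)` for every `q`, then every minimizer has all
coordinates of every block in `{−1, 1}`. -/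
theorem penalized_objective_minimizers_binary {m n Q : ℕ} (hQ : 0 < Q)
    (H : Matrix (Fin m) (Fin n) ℝ) (r : EuclideanSpace ℝ (Fin m))
    (α : Fin Q → ℝ) (hα0 : ∀ q, 0 ≤ α q)
    (f : (Fin Q → EuclideanSpace ℝ (Fin n)) → ℝ)
    (hf : ∀ xs, f xs = (1 / 2) * ‖r - toE (H.mulVec (fun i => ∑ q : Fin Q, 2 ^ (q : ℕ) * xs q i))‖ ^ 2
        - ∑ q : Fin Q, α q / 2 * ‖xs q‖ ^ 2)
    (S : Set (Fin Q → EuclideanSpace ℝ (Fin n)))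
    (hS : S = {xs | ∀ q i, xs q i ∈ Set.Icc (-1 : ℝ) 1}) :
    (∃ xs ∈ S, ∀ ys ∈ S, f xs ≤ f ys) ∧
    ((∀ q : Fin Q, 4 ^ (q : ℕ) * lamMax H < α q) →
      ∀ xs ∈ S, (∀ ys ∈ S, f xs ≤ f ys) → ∀ q i, xs q i = 1 ∨ xs q i = -1) :=
  penalized_objective_minimizers_binary_general H r α f hf S hS
end
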